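/- A Borel probability measure μ on Cantor space is Martin-Löf absolutely continuous if and only if μ passes every Solovay test. -/

import Mathlib

/-!
An ML test is a Solovay test, since `∑ 2⁻ᵐ < ∞`; so passing every Solovay test makes `μ (G_m) → 0`
and hence `⨅ m, μ (G_m) = 0`.

Conversely, let `S_k` be a Solovay test with `∑ λ (S_k) < c`. The points lying in at least `2ᵐ c`
of the sets `S_k` form an open set `G_m`, enumerable uniformly in `m`, and Markov's inequality for
the counting function `∑ₖ 𝟙_{S_k}` gives `λ (G_m) ≤ 2⁻ᵐ`. Every `G_m` contains `limsup S_k`, whose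
`μ`-measure is at least `limsup μ (S_k)` because `μ` is finite. So if `μ (S_k) ↛ 0` the ML test
`(G_m)` has `⨅ m, μ (G_m) > 0`.
-/

open MeasureTheory
open scoped ENNReal

/-- The basic clopen cylinder `[σ]` of a finite binary string `σ`:
all `Z : ℕ → Bool` extending `σ`. -/
def cyl (σ : List Bool) : Set (ℕ → Bool) :=
  {Z | ∀ i : Fin σ.length, Z i = σ.get i}

/-- The `m`-th open set `G_m` determined by a test `f`: the union of the
cylinders `[σ]` over the strings `σ` enumerated by `f m`. -/
def testSet (f : ℕ → ℕ → Option (List Bool)) (m : ℕ) : Set (ℕ → Bool) :=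
  ⋃ σ ∈ {σ : List Bool | ∃ i, f m i = some σ}, cyl σ

/-- `lam` is the fair-coin product probability measure on Cantor space:
the (unique) Borel probability measure giving each cylinder `[σ]` measure
`2 ^ (-|σ|)`. -/
def IsFairCoin (lam : Measure (ℕ → Bool)) : Prop :=
  IsProbabilityMeasure lam ∧ ∀ σ : List Bool, lam (cyl σ) = 2⁻¹ ^ σ.length

/-- A Martin-Löf test with respect to the fair-coin measure `lam`: a
computable `f : ℕ → ℕ → Option (List Bool)` whose associated open sets
`G_m` satisfy `lam (G_m) ≤ 2 ^ (-m)`. -/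
def IsMLTest (lam : Measure (ℕ → Bool)) (f : ℕ → ℕ → Option (List Bool)) : Prop :=
  Computable₂ f ∧ ∀ m : ℕ, lam (testSet f m) ≤ 2⁻¹ ^ m

/-- `Z` is Martin-Löf random: it passes every Martin-Löf test. -/
def MLRandom (lam : Measure (ℕ → Bool)) (Z : ℕ → Bool) : Prop :=
  ∀ f, IsMLTest lam f → ∃ m, Z ∉ testSet f m

/-- A measure `μ` is Martin-Löf absolutely continuous:
`inf_m μ (G_m) = 0` for every Martin-Löf test. -/
def MLAC (lam μ : Measure (ℕ → Bool)) : Prop :=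
  ∀ f, IsMLTest lam f → ⨅ m, μ (testSet f m) = 0

/-- A Solovay test with respect to the fair-coin measure `lam`: a computable
`g` whose associated open sets `S_k` satisfy `∑_k lam (S_k) < ∞`. -/
def IsSolovayTest (lam : Measure (ℕ → Bool)) (g : ℕ → ℕ → Option (List Bool)) : Prop :=
  Computable₂ g ∧ ∑' k, lam (testSet g k) < ⊤

open Filter Finset Topology

section Counting

variable {α : Type*}

def coveredAtLeast (S : ℕ → Set α) (N : ℕ) : Set α :=
  {x | ∃ F : Finset ℕ, N ≤ #F ∧ ∀ k ∈ F, x ∈ S k}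

theorem mul_measure_coveredAtLeast_le_tsum [MeasurableSpace α] (ν : Measure α) {S : ℕ → Set α}
    (hS : ∀ k, MeasurableSet (S k)) (N : ℕ) :
    N * ν (coveredAtLeast S N) ≤ ∑' k, ν (S k) := by
  set count : α → ℝ≥0∞ := fun x => ∑' k, (S k).indicator 1 x
  have hcount : Measurable count :=
    Measurable.tsum fun k => measurable_one.indicator (hS k)
  have hsub : coveredAtLeast S N ⊆ {x | (N : ℝ≥0∞) ≤ count x} := by
    rintro x ⟨F, hNF, hF⟩
    calc (N : ℝ≥0∞) ≤ #F := by exact_mod_cast hNF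
      _ = ∑ k ∈ F, (S k).indicator 1 x := by
        rw [Finset.sum_congr rfl fun k hk => Set.indicator_of_mem (hF k hk) _]
        simp
      _ ≤ count x := ENNReal.sum_le_tsum F
  calc N * ν (coveredAtLeast S N) ≤ N * ν {x | (N : ℝ≥0∞) ≤ count x} := by
        gcongr
    _ ≤ ∫⁻ x, count x ∂ν := mul_meas_ge_le_lintegral₀ hcount.aemeasurable _
    _ = ∑' k, ν (S k) := by
        rw [lintegral_tsum fun k => (measurable_one.indicator (hS k)).aemeasurable]
        simp [lintegral_indicator_one (hS _)]

theorem limsup_subset_coveredAtLeast (S : ℕ → Set α) (N : ℕ) :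
    limsup S atTop ⊆ coveredAtLeast S N := by
  intro x hx
  rw [mem_limsup_iff_frequently_mem, Nat.frequently_atTop_iff_infinite] at hx
  obtain ⟨F, hF, hcard⟩ := hx.exists_subset_card_eq N
  exact ⟨F, hcard.ge, fun k hk => hF hk⟩

theorem le_measure_limsup_of_frequently_le [MeasurableSpace α] (μ : Measure α) [IsFiniteMeasure μ]
    {S : ℕ → Set α} (hS : ∀ k, MeasurableSet (S k)) {ε : ℝ≥0∞}
    (hε : ∃ᶠ k in atTop, ε ≤ μ (S k)) : ε ≤ μ (limsup S atTop) := by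
  rw [limsup_eq_iInf_iSup_of_nat]
  have htail : Tendsto (fun n => μ (⋃ k ≥ n, S k)) atTop (𝓝 (μ (⋂ n, ⋃ k ≥ n, S k))) :=
    tendsto_measure_iInter_atTop
      (fun _ => (MeasurableSet.iUnion fun k =>
        MeasurableSet.iUnion fun _ => hS k).nullMeasurableSet)
      (fun m n hmn => Set.iUnion₂_mono' fun k hk => ⟨k, hmn.trans hk, subset_rfl⟩)
      ⟨0, measure_ne_top μ _⟩
  refine ge_of_tendsto htail (Eventually.of_forall fun n => ?_)
  obtain ⟨k, hk, hεk⟩ := (frequently_atTop.1 hε) n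
  exact hεk.trans (measure_mono (Set.subset_iUnion₂ (s := fun k (_ : k ≥ n) => S k) k hk))

end Counting

theorem measurableSet_cyl (σ : List Bool) : MeasurableSet (cyl σ) := by
  have : cyl σ = ⋂ i : Fin σ.length, (fun Z : ℕ → Bool => Z i) ⁻¹' {σ.get i} := by
    ext Z; simp [cyl]
  rw [this]
  exact MeasurableSet.iInter fun i => measurable_pi_apply _ (measurableSet_singleton _)

theorem measurableSet_testSet (f : ℕ → ℕ → Option (List Bool)) (m : ℕ) :
    MeasurableSet (testSet f m) :=
  MeasurableSet.biUnion (Set.to_countable _) fun σ _ => measurableSet_cyl σ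

theorem mem_testSet {f : ℕ → ℕ → Option (List Bool)} {m : ℕ} {Z : ℕ → Bool} :
    Z ∈ testSet f m ↔ ∃ i σ, f m i = some σ ∧ Z ∈ cyl σ := by
  simp only [testSet, Set.mem_iUnion, exists_prop]
  constructor
  · rintro ⟨σ, ⟨i, hi⟩, hZ⟩; exact ⟨i, σ, hi, hZ⟩
  · rintro ⟨i, σ, hi, hZ⟩; exact ⟨σ, ⟨i, hi⟩, hZ⟩

theorem mem_cyl_iff_prefix_ofFn {Z : ℕ → Bool} {σ : List Bool} {L : ℕ} (hL : σ.length ≤ L) :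
    Z ∈ cyl σ ↔ σ <+: List.ofFn fun i : Fin L => Z i := by
  simp only [cyl, List.prefix_iff_getElem, List.length_ofFn, hL,
    List.getElem_ofFn, exists_true_left, Fin.forall_iff, List.get_eq_getElem]
  exact forall₂_congr fun i hi => eq_comm

theorem mem_cyl_ofFn (Z : ℕ → Bool) (L : ℕ) : Z ∈ cyl (List.ofFn fun i : Fin L => Z i) :=
  (mem_cyl_iff_prefix_ofFn (List.length_ofFn).le).2 (List.prefix_refl _)

theorem cyl_subset_cyl_of_prefix {σ τ : List Bool} (h : τ <+: σ) : cyl σ ⊆ cyl τ := fun _ hZ =>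
  (mem_cyl_iff_prefix_ofFn h.length_le).2 (h.trans ((mem_cyl_iff_prefix_ofFn le_rfl).1 hZ))

section Computability

variable {α : Type*} [Primcodable α]

theorem Computable.card_filter_range {n : α → ℕ} {p : α → ℕ → Bool} (hn : Computable n)
    (hp : Computable₂ p) : Computable fun a => #{k ∈ range (n a) | p a k} := by
  have hstep : Computable₂ fun a (q : ℕ × ℕ) => q.2 + bif p a q.1 then 1 else 0 :=
    Primrec.nat_add.to_comp.comp (Computable.snd.comp .snd)
      (Computable.cond (hp.comp .fst (Computable.fst.comp .snd)) (.const 1) (.const 0))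
  refine (Computable.nat_rec hn (.const 0) hstep).of_eq fun a => ?_
  induction n a with
  | zero => rfl
  | succ k ih =>
    simp only at ih ⊢
    rw [ih, Finset.range_add_one, Finset.filter_insert]
    cases p a k <;> simp [Finset.card_insert_of_notMem]

theorem Computable.decide_exists_lt {n : α → ℕ} {p : α → ℕ → Bool} (hn : Computable n)
    (hp : Computable₂ p) : Computable fun a => decide (∃ k < n a, p a k) :=
  (Primrec.nat_lt.decide.to_comp.comp (.const 0) (Computable.card_filter_range hn hp)).of_eq
    fun a => by simp [Finset.card_pos, Finset.filter_nonempty_iff]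

theorem primrecRel_isPrefix {β : Type*} [Primcodable β] [DecidableEq β] :
    PrimrecRel fun τ σ : List β => τ <+: σ :=
  (PrimrecRel.comp Primrec.eq Primrec.fst
    (Primrec.list_take.comp (Primrec.list_length.comp .fst) .snd)).of_eq
    fun _ => List.prefix_iff_eq_take.symm

end Computability

def stageHits (g : ℕ → ℕ → Option (List Bool)) (n : ℕ) (σ : List Bool) : ℕ :=
  #{k ∈ range n | ∃ i < n, (g k i).any fun τ => decide (τ <+: σ)}

/-- Index `j` codes a pair `(n, σ)`; the string `σ` is enumerated into the `m`-th set once, by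
stage `n`, at least `N m` of the sets of `g` are seen to contain `[σ]`. -/
def countingTest (g : ℕ → ℕ → Option (List Bool)) (N : ℕ → ℕ) (m j : ℕ) :
    Option (List Bool) :=
  (Encodable.decode j : Option (ℕ × List Bool)).bind fun p =>
    if N m ≤ stageHits g p.1 p.2 then some p.2 else none

theorem computable₂_stageHits {g : ℕ → ℕ → Option (List Bool)} (hg : Computable₂ g) :
    Computable₂ (stageHits g) := by
  have hprefix : Computable₂ fun (a : ((ℕ × List Bool) × ℕ) × ℕ) (τ : List Bool) =>
      decide (τ <+: a.1.1.2) :=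
    primrecRel_isPrefix.decide.to_comp.comp .snd
      (Computable.snd.comp (Computable.fst.comp (Computable.fst.comp .fst)))
  have hany : Computable₂ fun (a : (ℕ × List Bool) × ℕ) (i : ℕ) =>
      (g a.2 i).any fun τ => decide (τ <+: a.1.2) := by
    refine (Computable.option_casesOn (hg.comp (Computable.snd.comp .fst) .snd) (.const false)
      hprefix).of_eq fun a => ?_
    dsimp only
    cases g a.1.2 a.2 <;> rfl
  have hexists : Computable₂ fun (a : ℕ × List Bool) (k : ℕ) =>
      decide (∃ i < a.1, (g k i).any fun τ => decide (τ <+: a.2)) :=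
    Computable.decide_exists_lt (Computable.fst.comp .fst) hany
  refine (Computable.card_filter_range Computable.fst hexists).of_eq fun a => ?_
  simp [stageHits]

theorem computable₂_countingTest {g : ℕ → ℕ → Option (List Bool)} (hg : Computable₂ g)
    {N : ℕ → ℕ} (hN : Computable N) : Computable₂ (countingTest g N) := by
  have hguard : Computable₂ fun (a : ℕ × ℕ) (p : ℕ × List Bool) =>
      if N a.1 ≤ stageHits g p.1 p.2 then some p.2 else none :=
    (Computable.cond
      (Primrec.nat_le.decide.to_comp.comp (hN.comp (Computable.fst.comp .fst))
        ((computable₂_stageHits hg).comp (Computable.fst.comp .snd) (Computable.snd.comp .snd)))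
      (Computable.option_some.comp (Computable.snd.comp .snd)) (.const none)).of_eq
      fun _ => Bool.cond_decide _ _ _
  exact Computable.option_bind (Computable.decode.comp .snd) hguard

theorem testSet_countingTest (g : ℕ → ℕ → Option (List Bool)) (N : ℕ → ℕ) (m : ℕ) :
    testSet (countingTest g N) m = coveredAtLeast (testSet g) (N m) := by
  ext Z
  constructor
  · rw [mem_testSet]
    rintro ⟨j, σ, hj, hZσ⟩
    obtain ⟨⟨n, σ'⟩, -, hsome⟩ := Option.bind_eq_some_iff.1 hj
    split_ifs at hsome with hN
    cases hsome
    refine ⟨_, hN, fun k hk => ?_⟩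
    obtain ⟨-, i, -, hi⟩ := by simpa using hk
    obtain ⟨τ, hτ, hτσ⟩ := Option.any_eq_true _ _ |>.1 hi
    exact mem_testSet.2 ⟨i, τ, hτ, cyl_subset_cyl_of_prefix (of_decide_eq_true hτσ) hZσ⟩
  · rintro ⟨F, hN, hF⟩
    choose! i τ hτ hZτ using fun k hk => mem_testSet.1 (hF k hk)
    set n := F.sup (fun k => max k (i k)) + 1
    set σ := List.ofFn fun l : Fin (F.sup fun k => (τ k).length) => Z l
    have hhits : N m ≤ stageHits g n σ := by
      refine hN.trans (Finset.card_le_card fun k hk => ?_)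
      have hk' : max k (i k) < n := Nat.lt_succ_of_le (Finset.le_sup (f := fun k => max k (i k)) hk)
      simp only [Finset.mem_filter, Finset.mem_range]
      refine ⟨lt_of_le_of_lt (le_max_left _ _) hk', i k, lt_of_le_of_lt (le_max_right _ _) hk', ?_⟩
      rw [hτ k hk]
      exact decide_eq_true ((mem_cyl_iff_prefix_ofFn
        (Finset.le_sup (f := fun k => (τ k).length) hk)).1 (hZτ k hk))
    refine mem_testSet.2 ⟨Encodable.encode (n, σ), σ, ?_, mem_cyl_ofFn Z _⟩
    simp [countingTest, hhits]

theorem IsMLTest.isSolovayTest {lam : Measure (ℕ → Bool)} {f : ℕ → ℕ → Option (List Bool)}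
    (hf : IsMLTest lam f) : IsSolovayTest lam f := by
  refine ⟨hf.1, (ENNReal.tsum_le_tsum hf.2).trans_lt ?_⟩
  rw [ENNReal.tsum_geometric, ENNReal.one_sub_inv_two, inv_inv]
  exact ENNReal.ofNat_lt_top

theorem IsSolovayTest.exists_isMLTest_limsup_subset {lam : Measure (ℕ → Bool)}
    {g : ℕ → ℕ → Option (List Bool)} (hg : IsSolovayTest lam g) :
    ∃ f, IsMLTest lam f ∧ ∀ m, limsup (testSet g) atTop ⊆ testSet f m := by
  obtain ⟨c, hc⟩ := ENNReal.exists_nat_gt hg.2.ne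
  have hc0 : (c : ℝ≥0∞) ≠ 0 := (pos_of_gt hc).ne'
  have hN : Computable fun m : ℕ => 2 ^ m * c :=
    (Primrec.nat_mul.comp ((Primrec₂.unpaired'.1 Nat.Primrec.pow).comp (.const 2) .id)
      (.const c)).to_comp
  refine ⟨countingTest g fun m => 2 ^ m * c, ⟨computable₂_countingTest hg.1 hN, fun m => ?_⟩,
    fun m => ?_⟩
  · rw [testSet_countingTest, ← ENNReal.inv_pow, ENNReal.le_inv_iff_mul_le]
    refine (ENNReal.mul_le_mul_iff_right hc0 (ENNReal.natCast_ne_top c)).1 ?_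
    calc (c : ℝ≥0∞) * (lam (coveredAtLeast (testSet g) (2 ^ m * c)) * 2 ^ m)
        = ((2 ^ m * c : ℕ) : ℝ≥0∞) * lam (coveredAtLeast (testSet g) (2 ^ m * c)) := by
          push_cast; ring
      _ ≤ ∑' k, lam (testSet g k) :=
          mul_measure_coveredAtLeast_le_tsum lam (measurableSet_testSet g) _
      _ ≤ c * 1 := by rw [mul_one]; exact hc.le
  · rw [testSet_countingTest]
    exact limsup_subset_coveredAtLeast _ _

theorem stmt15_general (lam : Measure (ℕ → Bool))
    (μ : Measure (ℕ → Bool)) [IsProbabilityMeasure μ] :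
    MLAC lam μ ↔
      ∀ g, IsSolovayTest lam g →
        Filter.Tendsto (fun k => μ (testSet g k)) Filter.atTop (nhds 0) := by
  refine ⟨fun hml g hg => ?_, fun hsol f hf => ?_⟩
  · by_contra hg0
    obtain ⟨ε, hε, hfreq⟩ : ∃ ε > 0, ∃ᶠ k in atTop, ε < μ (testSet g k) := by
      simpa only [ENNReal.tendsto_nhds_zero, not_forall, not_eventually, not_le, exists_prop]
        using hg0
    obtain ⟨f, hf, hsub⟩ := hg.exists_isMLTest_limsup_subset
    have hlimsup : ε ≤ μ (limsup (testSet g) atTop) :=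
      le_measure_limsup_of_frequently_le μ (measurableSet_testSet g) (hfreq.mono fun _ => le_of_lt)
    have hinf : ε ≤ ⨅ m, μ (testSet f m) :=
      le_iInf fun m => hlimsup.trans (measure_mono (hsub m))
    exact hε.ne' (le_zero_iff.1 (hml f hf ▸ hinf))
  · exact le_antisymm (ge_of_tendsto' (hsol f hf.isSolovayTest) fun m => iInf_le _ m) bot_le

/-- A Borel probability measure `μ` on Cantor space is
Martin-Löf absolutely continuous iff `μ` passes every Solovay test, i.e.
`μ (S_k) → 0`. -/
theorem stmt15 (lam : Measure (ℕ → Bool)) (hlam : IsFairCoin lam)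
    (μ : Measure (ℕ → Bool)) [IsProbabilityMeasure μ] :
    MLAC lam μ ↔
      ∀ g, IsSolovayTest lam g →
        Filter.Tendsto (fun k => μ (testSet g k)) Filter.atTop (nhds 0) :=
  stmt15_general lam μ
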